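/- arXiv:0911.3495 — 2 statements merged into one kernel-verified Lean document; each statement's English description precedes it below -/
import Mathlib

section
/- Let R be a commutative ring and A an invertible n×n matrix over R. Then the 2n×2n block diagonal matrix with blocks A and A⁻¹ is a product of elementary matrices. -/
open Matrix

variable {R : Type*} [CommRing R]

/-- Block diagonal sum of square matrices. -/
def blockDiagSum {n m : ℕ} (A : Matrix (Fin n) (Fin n) R) (B : Matrix (Fin m) (Fin m) R) :
    Matrix (Fin (n + m)) (Fin (n + m)) R :=
  Matrix.reindex finSumFinEquiv finSumFinEquiv (Matrix.fromBlocks A 0 0 B)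

/-- The standard symplectic matrix: block diagonal with blocks `[[0,1],[-1,0]]`. -/
def psi (R : Type*) [CommRing R] (n : ℕ) : Matrix (Fin n) (Fin n) R :=
  Matrix.of fun i j =>
    if (i : ℕ) % 2 = 0 ∧ (j : ℕ) = i + 1 then 1
    else if (j : ℕ) % 2 = 0 ∧ (i : ℕ) = j + 1 then -1 else 0

/-- A matrix is elementary if it is the identity plus a single off-diagonal entry. -/
def IsElementary {n : ℕ} (E : Matrix (Fin n) (Fin n) R) : Prop :=
  ∃ i j : Fin n, i ≠ j ∧ ∃ r : R, E = 1 + Matrix.single i j r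

/-- A matrix is a product of elementary matrices. -/
def IsElemProd {n : ℕ} (M : Matrix (Fin n) (Fin n) R) : Prop :=
  ∃ L : List (Matrix (Fin n) (Fin n) R), (∀ E ∈ L, IsElementary E) ∧ L.prod = M

/-! Block unitriangular matrices `[[1, B], [0, 1]]` and `[[1, 0], [C, 1]]` are products of
elementary matrices, one factor per entry of `B` (resp. `C`), because the off-diagonal blocks add
under multiplication. For `B C = C B = 1` the "Weyl" matrix `w(B) = [[0, B], [-C, 0]]` factors as
`[[1, B], [0, 1]] [[1, 0], [-C, 1]] [[1, B], [0, 1]]`, and `diag(B, C) = w(B) w(-1)`. -/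

namespace IsElemProd

variable {n : ℕ}

theorem one : IsElemProd (1 : Matrix (Fin n) (Fin n) R) :=
  ⟨[], by simp, rfl⟩

theorem mul {M N : Matrix (Fin n) (Fin n) R} (hM : IsElemProd M) (hN : IsElemProd N) :
    IsElemProd (M * N) := by
  obtain ⟨L, hL, rfl⟩ := hM
  obtain ⟨L', hL', rfl⟩ := hN
  refine ⟨L ++ L', fun E hE => ?_, List.prod_append⟩
  rcases List.mem_append.1 hE with h | h
  exacts [hL E h, hL' E h]

theorem of_isElementary {E : Matrix (Fin n) (Fin n) R} (hE : IsElementary E) : IsElemProd E :=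
  ⟨[E], by simpa using hE, List.prod_singleton⟩

theorem transpose {M : Matrix (Fin n) (Fin n) R} (hM : IsElemProd M) : IsElemProd Mᵀ := by
  obtain ⟨L, hL, rfl⟩ := hM
  refine ⟨(L.map Matrix.transpose).reverse, fun E hE => ?_, (transpose_list_prod L).symm⟩
  obtain ⟨F, hF, rfl⟩ := List.mem_map.1 (List.mem_reverse.1 hE)
  obtain ⟨i, j, hij, r, rfl⟩ := hL F hF
  exact ⟨j, i, hij.symm, r, by rw [transpose_add, transpose_one, transpose_single]⟩

end IsElemProd

section BlockTransvection

variable {n m : ℕ}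

theorem isElemProd_reindex_mul {M N : Matrix (Fin n ⊕ Fin m) (Fin n ⊕ Fin m) R}
    (hM : IsElemProd (reindex finSumFinEquiv finSumFinEquiv M))
    (hN : IsElemProd (reindex finSumFinEquiv finSumFinEquiv N)) :
    IsElemProd (reindex finSumFinEquiv finSumFinEquiv (M * N)) := by
  simpa only [reindex_apply, submatrix_mul_equiv] using hM.mul hN

theorem isElemProd_fromBlocks_one_upper (B : Matrix (Fin n) (Fin m) R) :
    IsElemProd (reindex finSumFinEquiv finSumFinEquiv (fromBlocks 1 B 0 1)) := by
  induction B using Matrix.induction_on' with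
  | h_zero => simpa [fromBlocks_one] using (IsElemProd.one (R := R))
  | h_add B C hB hC =>
    have hsplit : fromBlocks 1 (B + C) 0 (1 : Matrix (Fin m) (Fin m) R) =
        fromBlocks 1 B 0 1 * fromBlocks (1 : Matrix (Fin n) (Fin n) R) C 0 1 := by
      simp [fromBlocks_multiply, add_comm]
    rw [hsplit]
    exact isElemProd_reindex_mul hB hC
  | h_std_basis i j r =>
    refine IsElemProd.of_isElementary ⟨finSumFinEquiv (.inl i), finSumFinEquiv (.inr j),
      finSumFinEquiv.injective.ne Sum.inl_ne_inr, r, ?_⟩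
    have hblock : fromBlocks (1 : Matrix (Fin n) (Fin n) R) (Matrix.single i j r) 0
        (1 : Matrix (Fin m) (Fin m) R) = 1 + Matrix.single (.inl i) (.inr j) r := by
      ext (a | a) (b | b) <;> simp [one_apply, single_apply]
    rw [hblock, reindex_apply, submatrix_add, Pi.add_apply, Pi.add_apply, submatrix_one_equiv,
      submatrix_single_equiv, Equiv.symm_symm]

theorem isElemProd_fromBlocks_one_lower (C : Matrix (Fin m) (Fin n) R) :
    IsElemProd (reindex finSumFinEquiv finSumFinEquiv (fromBlocks 1 0 C 1)) := by
  simpa [transpose_reindex, fromBlocks_transpose] using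
    (isElemProd_fromBlocks_one_upper Cᵀ).transpose

theorem isElemProd_fromBlocks_zero_of_mul_eq_one {B C : Matrix (Fin n) (Fin n) R}
    (hBC : B * C = 1) (hCB : C * B = 1) :
    IsElemProd (reindex finSumFinEquiv finSumFinEquiv (fromBlocks 0 B (-C) 0)) := by
  have hfactor : fromBlocks 0 B (-C) 0 =
      fromBlocks 1 B 0 1 * fromBlocks 1 0 (-C) 1 * fromBlocks 1 B 0 1 := by
    simp [fromBlocks_multiply, hBC, hCB]
  rw [hfactor]
  exact isElemProd_reindex_mul (isElemProd_reindex_mul (isElemProd_fromBlocks_one_upper B)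
    (isElemProd_fromBlocks_one_lower (-C))) (isElemProd_fromBlocks_one_upper B)

end BlockTransvection

/-- Whitehead's lemma at the matrix level: for an invertible matrix `A`, the block
diagonal matrix `diag(A, A⁻¹)` is a product of elementary matrices. -/
theorem stmt_1 {R : Type*} [CommRing R] {n : ℕ} (A : (Matrix (Fin n) (Fin n) R)ˣ) :
    IsElemProd (blockDiagSum (A : Matrix (Fin n) (Fin n) R) ((A⁻¹ : _) : Matrix (Fin n) (Fin n) R)) := by
  obtain ⟨B, C, hBC, hCB⟩ := A
  have hfactor : fromBlocks B 0 0 C = fromBlocks 0 B (-C) 0 * fromBlocks 0 (-1) (-(-1)) 0 := by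
    simp [fromBlocks_multiply]
  change IsElemProd (reindex finSumFinEquiv finSumFinEquiv (fromBlocks B 0 0 C))
  rw [hfactor]
  exact isElemProd_reindex_mul (isElemProd_fromBlocks_zero_of_mul_eq_one hBC hCB)
    (isElemProd_fromBlocks_zero_of_mul_eq_one (by simp) (by simp))
end

section
/- Let R be a commutative ring. A stably free R-module of rank 1 is free. That is, if L is a finitely generated projective R-module with L ⊕ Rⁿ ≅ R^{n+1}, then L ≅ R. -/
/-!
Write `L × Rⁿ ≅ Rⁿ⁺¹` as a splitting `id = i ∘ p + s ∘ f` with `f : Rⁿ⁺¹ → Rⁿ`, `f ∘ s = id`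
and `p ∘ i = id`, so that `L` is a retract of `Rⁿ⁺¹` through the idempotent `1 - B A`, where `A`
and `B` are the matrices of `f` and `s`. Bordering `A` by a row `yᵀ` and `B` by a column `x`, the
Schur complement formula gives `det [A; yᵀ] · det [B | x] = yᵀ (1 - B A) x`, so `1 - B A = c dᵀ`
has rank one, and `d ⬝ c = trace (1 - B A) = (n + 1) - n = 1`. Hence `L ≅ R c ≅ R`.
-/

open Matrix

namespace Matrix

variable {m n R : Type*} [Fintype m] [Fintype n] [DecidableEq m] [DecidableEq n] [CommRing R]

theorem det_fromRows_mul_det_fromCols {A : Matrix m n R} {B : Matrix n m R} (hAB : A * B = 1)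
    (σ : m ⊕ Unit ≃ n) (x y : n → R) :
    det ((fromRows A (replicateRow Unit y)).submatrix id σ) *
        det ((fromCols B (replicateCol Unit x)).submatrix σ id) =
      y ⬝ᵥ ((1 - B * A) *ᵥ x) := by
  rw [← det_mul, submatrix_mul_equiv, submatrix_id_id, fromRows_mul_fromCols, hAB,
    det_fromBlocks_one₁₁, det_unique, sub_mulVec, one_mulVec, dotProduct_sub, ← mulVec_mulVec,
    dotProduct_mulVec, ← replicateCol_mulVec, ← replicateRow_vecMul, sub_apply]
  rfl

theorem exists_one_sub_mul_eq_vecMulVec {A : Matrix m n R} {B : Matrix n m R} (hAB : A * B = 1)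
    (hcard : Fintype.card n = Fintype.card m + 1) :
    ∃ c d : n → R, 1 - B * A = vecMulVec c d ∧ d ⬝ᵥ c = 1 := by
  obtain ⟨σ⟩ : Nonempty (m ⊕ Unit ≃ n) := Fintype.card_eq.mp (by simp [hcard])
  have hP : 1 - B * A = vecMulVec
      (fun i => det ((fromRows A (replicateRow Unit (Pi.single i 1))).submatrix id σ))
      (fun j => det ((fromCols B (replicateCol Unit (Pi.single j 1))).submatrix σ id)) :=
    ext fun i j => by
      rw [vecMulVec_apply, det_fromRows_mul_det_fromCols hAB, mulVec_single_one,
        single_one_dotProduct, col_apply]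
  have htrace : trace (1 - B * A) = 1 := by
    rw [trace_sub, trace_one, trace_mul_comm, hAB, trace_one, hcard]
    push_cast
    ring
  exact ⟨_, _, hP, by rw [dotProduct_comm, ← trace_vecMulVec, ← hP, htrace]⟩

end Matrix

namespace LinearMap

variable {R : Type*} [CommRing R]

theorem exists_id_sub_comp_eq_smulRight {m n : Type*} [Fintype m] [Fintype n] [DecidableEq m]
    [DecidableEq n] {f : (n → R) →ₗ[R] m → R} {s : (m → R) →ₗ[R] n → R} (hfs : f ∘ₗ s = id)
    (hcard : Fintype.card n = Fintype.card m + 1) :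
    ∃ (φ : Module.Dual R (n → R)) (c : n → R), id - s ∘ₗ f = φ.smulRight c ∧ φ c = 1 := by
  have hAB : toMatrix' f * toMatrix' s = 1 := by rw [← toMatrix'_comp, hfs, toMatrix'_id]
  obtain ⟨c, d, hP, hdc⟩ := exists_one_sub_mul_eq_vecMulVec hAB hcard
  refine ⟨dotProductEquiv R n d, c, LinearMap.ext fun v => ?_, hdc⟩
  simpa [sub_mulVec, ← mulVec_mulVec, toMatrix'_mulVec, vecMulVec_mulVec] using congr($hP *ᵥ v)

theorem nonempty_linearEquiv_of_comp_eq_smulRight {L V : Type*} [AddCommGroup L] [Module R L]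
    [AddCommGroup V] [Module R V] {i : L →ₗ[R] V} {p : V →ₗ[R] L} (hpi : p ∘ₗ i = id)
    {φ : Module.Dual R V} {c : V} (hip : i ∘ₗ p = φ.smulRight c) (hc : φ c = 1) :
    Nonempty (L ≃ₗ[R] R) := by
  have hpi_apply : ∀ x, p (i x) = x := fun x => congr($hpi x)
  have hic : i (p c) = c := by simpa [hc] using congr($hip c)
  refine ⟨.ofLinearMap (f := φ ∘ₗ i) (g := toSpanSingleton R L (p c)) (ext_ring ?_)
    (ext fun x => ?_)⟩
  · simp [hic, hc]
  · calc φ (i x) • p c = p (i (p (i x))) := by rw [← map_smul, ← smulRight_apply, ← hip]; rfl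
      _ = x := by rw [hpi_apply, hpi_apply]

end LinearMap

theorem stmt_17_general (R : Type*) [CommRing R] (L : Type*) [AddCommGroup L] [Module R L]
    (n : ℕ)
    (e : (L × (Fin n → R)) ≃ₗ[R] (Fin (n + 1) → R)) :
    Nonempty (L ≃ₗ[R] R) := by
  let i := e.toLinearMap ∘ₗ LinearMap.inl R L (Fin n → R)
  let p := LinearMap.fst R L (Fin n → R) ∘ₗ e.symm.toLinearMap
  let s := e.toLinearMap ∘ₗ LinearMap.inr R L (Fin n → R)
  let f := LinearMap.snd R L (Fin n → R) ∘ₗ e.symm.toLinearMap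
  have hfs : f ∘ₗ s = .id := by ext; simp [f, s]
  have hpi : p ∘ₗ i = .id := by ext; simp [p, i]
  have hip : i ∘ₗ p = .id - s ∘ₗ f := by
    refine LinearMap.ext fun v => ?_
    simp [i, p, s, f, eq_sub_iff_add_eq, ← map_add]
  obtain ⟨φ, c, hP, hc⟩ := LinearMap.exists_id_sub_comp_eq_smulRight hfs (by simp)
  exact LinearMap.nonempty_linearEquiv_of_comp_eq_smulRight hpi (hip.trans hP) hc

/-- A stably free module of rank 1 over a commutative ring is free:
if `L ⊕ Rⁿ ≃ R^(n+1)` then `L ≃ R`. -/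
theorem stmt_17 (R : Type*) [CommRing R] (L : Type*) [AddCommGroup L] [Module R L]
    [Module.Finite R L] [Module.Projective R L] (n : ℕ)
    (e : (L × (Fin n → R)) ≃ₗ[R] (Fin (n + 1) → R)) :
    Nonempty (L ≃ₗ[R] R) :=
  stmt_17_general R L n e
end
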